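/- Let α ∈ F_q^n have distinct entries, v, w ∈ (F_q^×)^n, and k, ℓ ≥ 1 with k + ℓ - 1 ≤ n. Then the dimension of the star product GRS_k(α,v) ⋆ GRS_ℓ(α,w) equals k + ℓ - 1 (in contrast to the generic upper bound kℓ). -/
import Mathlib


open Polynomial Finset

variable {F : Type*} [Field F]

/-- Star (Schur) product of two codes: span of coordinatewise products. -/
def starProd {n : ℕ} (C D : Submodule F (Fin n → F)) : Submodule F (Fin n → F) :=
  Submodule.span F {x | ∃ c ∈ C, ∃ d ∈ D, x = c * d}

/-- Dual code w.r.t. the standard bilinear form. -/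
def dualCode {n : ℕ} (C : Submodule F (Fin n → F)) : Submodule F (Fin n → F) where
  carrier := {w | ∀ c ∈ C, ∑ i, c i * w i = 0}
  add_mem' := by
    intro a b ha hb c hc
    have h1 := ha c hc
    have h2 := hb c hc
    simp only [Set.mem_setOf_eq] at *
    calc ∑ i, c i * (a + b) i = (∑ i, c i * a i) + ∑ i, c i * b i := by
          rw [← Finset.sum_add_distrib]
          exact Finset.sum_congr rfl fun i _ => by simp [mul_add]
      _ = 0 := by rw [h1, h2, add_zero]
  zero_mem' := by
    intro c hc
    simp
  smul_mem' := by
    intro r a ha c hc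
    have h := ha c hc
    simp only [Set.mem_setOf_eq] at *
    calc ∑ i, c i * (r • a) i = r * ∑ i, c i * a i := by
          rw [Finset.mul_sum]
          exact Finset.sum_congr rfl fun i _ => by simp [smul_eq_mul]; ring
      _ = 0 := by rw [h, mul_zero]

/-- The repetition code: span of the all-ones vector. -/
def repCode (F : Type*) [Field F] (n : ℕ) : Submodule F (Fin n → F) :=
  Submodule.span F {fun _ => (1 : F)}

/-- `d` is the minimum Hamming distance of the linear code `C`. -/
def IsMinDist {n : ℕ} [DecidableEq F] (C : Submodule F (Fin n → F)) (d : ℕ) : Prop :=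
  (∃ c ∈ C, c ≠ 0 ∧ hammingNorm c = d) ∧ ∀ c ∈ C, c ≠ 0 → d ≤ hammingNorm c

/-- Evaluation map `f ↦ (v i * f(α i))_i`. -/
def grsEval {F : Type*} [Field F] (n : ℕ) (α v : Fin n → F) :
    Polynomial F →ₗ[F] (Fin n → F) where
  toFun := fun f => fun i => v i * f.eval (α i)
  map_add' := by intro f g; funext i; simp [mul_add]
  map_smul' := by intro r f; funext i; simp [smul_eq_mul]; ring

/-- Generalized Reed–Solomon code of dimension (at most) `k`. -/
noncomputable def GRS {F : Type*} [Field F] (n k : ℕ) (α v : Fin n → F) :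
    Submodule F (Fin n → F) :=
  (Polynomial.degreeLT F k).map (grsEval n α v)

lemma grs_injOn {n m : ℕ} (α v : Fin n → F) (hα : Function.Injective α)
    (hv : ∀ i, v i ≠ 0) (hmn : m ≤ n) :
    ∀ f ∈ Polynomial.degreeLT F m, grsEval n α v f = 0 → f = 0 := by
  classical
  intro f hf h0
  by_contra hne
  have hroots : ∀ i : Fin n, f.IsRoot (α i) := by
    intro i
    have := congrFun h0 i
    simp [grsEval] at this
    rcases this with h | h
    · exact absurd h (hv i)
    · exact h
  have hcard : (Finset.univ.image α).card ≤ f.roots.toFinset.card := by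
    apply Finset.card_le_card
    intro x hx
    simp only [Finset.mem_image] at hx
    obtain ⟨i, _, rfl⟩ := hx
    rw [Multiset.mem_toFinset, Polynomial.mem_roots hne]
    exact hroots i
  have h1 : (Finset.univ.image α).card = n := by
    rw [Finset.card_image_of_injective _ hα, Finset.card_univ, Fintype.card_fin]
  have h2 : f.roots.toFinset.card ≤ f.natDegree :=
    le_trans (Multiset.toFinset_card_le _) (Polynomial.card_roots' f)
  have h3 : f.natDegree < m := (Polynomial.natDegree_lt_iff_degree_lt hne).2 (Polynomial.mem_degreeLT.1 hf)
  omega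

lemma finrank_GRS {n m : ℕ} (α v : Fin n → F) (hα : Function.Injective α)
    (hv : ∀ i, v i ≠ 0) (hmn : m ≤ n) :
    Module.finrank F (GRS n m α v) = m := by
  have he : GRS n m α v = LinearMap.range ((grsEval n α v).comp (Polynomial.degreeLT F m).subtype) := by
    rw [LinearMap.range_comp, Submodule.range_subtype]; rfl
  have hinj : Function.Injective ((grsEval n α v).comp (Polynomial.degreeLT F m).subtype) := by
    rw [← LinearMap.ker_eq_bot, LinearMap.ker_eq_bot']
    intro x hx
    exact Subtype.ext (grs_injOn α v hα hv hmn x x.2 hx)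
  rw [he, LinearMap.finrank_range_of_inj hinj,
    LinearEquiv.finrank_eq (Polynomial.degreeLTEquiv F m), Module.finrank_pi, Fintype.card_fin]

lemma star_eq {n k ℓ : ℕ} (α v w : Fin n → F)
    (hk : 1 ≤ k) (hl : 1 ≤ ℓ) :
    starProd (GRS n k α v) (GRS n ℓ α w) = GRS n (k + ℓ - 1) α (v * w) := by
  classical
  apply le_antisymm
  · rw [starProd, Submodule.span_le]
    rintro x ⟨c, hc, d, hd, rfl⟩
    obtain ⟨f, hf, rfl⟩ := hc
    obtain ⟨g, hg, rfl⟩ := hd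
    rw [SetLike.mem_coe]
    refine ⟨f * g, ?_, ?_⟩
    · rw [SetLike.mem_coe] at hf hg
      rw [SetLike.mem_coe, Polynomial.mem_degreeLT]
      rcases eq_or_ne (f * g) 0 with h | h
      · rw [h, Polynomial.degree_zero]
        exact_mod_cast WithBot.bot_lt_coe _
      · have hf0 : f ≠ 0 := fun h0 => h (by simp [h0])
        have hg0 : g ≠ 0 := fun h0 => h (by simp [h0])
        rw [← Polynomial.natDegree_lt_iff_degree_lt h, Polynomial.natDegree_mul hf0 hg0]
        have h1 : f.natDegree < k := (Polynomial.natDegree_lt_iff_degree_lt hf0).2 (Polynomial.mem_degreeLT.1 hf)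
        have h2 : g.natDegree < ℓ := (Polynomial.natDegree_lt_iff_degree_lt hg0).2 (Polynomial.mem_degreeLT.1 hg)
        omega
    · funext i
      simp [grsEval]
      ring
  · rw [GRS, Polynomial.degreeLT_eq_span_X_pow, Submodule.map_span, Submodule.span_le]
    rintro x ⟨p, hp, rfl⟩
    simp only [Finset.coe_image, Set.mem_image, Finset.mem_coe, Finset.mem_range] at hp
    obtain ⟨j, hj, rfl⟩ := hp
    set a := min j (k - 1) with ha
    set b := j - a with hb
    have hab : a + b = j := by omega
    have hak : a < k := by omega
    have hbl : b < ℓ := by omega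
    apply Submodule.subset_span
    refine ⟨grsEval n α v (X ^ a), ⟨X ^ a, ?_, rfl⟩, grsEval n α w (X ^ b), ⟨X ^ b, ?_, rfl⟩, ?_⟩
    · rw [SetLike.mem_coe, Polynomial.mem_degreeLT, Polynomial.degree_X_pow]
      exact_mod_cast hak
    · rw [SetLike.mem_coe, Polynomial.mem_degreeLT, Polynomial.degree_X_pow]
      exact_mod_cast hbl
    · funext i
      simp [grsEval, ← hab, pow_add]
      ring


theorem star_GRS_finrank {F : Type*} [Field F] [Fintype F] {n k ℓ : ℕ}
    (α v w : Fin n → F) (hα : Function.Injective α)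
    (hv : ∀ i, v i ≠ 0) (hw : ∀ i, w i ≠ 0)
    (hk : 1 ≤ k) (hl : 1 ≤ ℓ) (hn : k + ℓ - 1 ≤ n) :
    Module.finrank F (starProd (GRS n k α v) (GRS n ℓ α w)) = k + ℓ - 1 := by
  rw [star_eq α v w hk hl, finrank_GRS α (v * w) hα (fun i => mul_ne_zero (hv i) (hw i)) hn]
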